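/- Let X be a θ-invariant uniformly synchronized code with verbal synchronizing delay k, where θ is a bijective literal (anti)morphism. Let M = (X^{2k}A* ∩ A*X^{2k}) ∪ X* and let X′ be the minimal generating set of the submonoid M. Then X′ is θ-invariant. -/

import Mathlib

open List

variable {α : Type*}

/-- The submonoid (as a set) generated by `X`: all concatenations of words of `X`. -/
def StarSet (X : Set (List α)) : Set (List α) :=
  {w | ∃ l : List (List α), (∀ u ∈ l, u ∈ X) ∧ l.flatten = w}

/-- `X` is a (variable-length) code: unique factorization over `X`. -/
def IsCode (X : Set (List α)) : Prop :=
  ∀ l m : List (List α), (∀ u ∈ l, u ∈ X) → (∀ u ∈ m, u ∈ X) →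
    l.flatten = m.flatten → l = m

def Factor (u w : List α) : Prop := ∃ p s, p ++ u ++ s = w

def Factors (S : Set (List α)) : Set (List α) := {u | ∃ w ∈ S, Factor u w}

def Complete (X : Set (List α)) : Prop := Factors (StarSet X) = Set.univ

def Thin (X : Set (List α)) : Prop := Factors X ≠ Set.univ

def Invariant (θ : List α → List α) (X : Set (List α)) : Prop := θ '' X = X

def IsSubmonoidSet (M : Set (List α)) : Prop :=
  [] ∈ M ∧ ∀ u ∈ M, ∀ v ∈ M, u ++ v ∈ M

/-- Stability (equidivisibility) condition, characterizing free submonoids of `A*`. -/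
def Stable (M : Set (List α)) : Prop :=
  ∀ u v w, u ∈ M → u ++ v ∈ M → w ∈ M → v ++ w ∈ M → v ∈ M

def FreeSubmonoid (M : Set (List α)) : Prop := IsSubmonoidSet M ∧ Stable M

/-- Minimal generating set of a submonoid: `(M \ {ε}) \ (M \ {ε})²`. -/
def MinGen (M : Set (List α)) : Set (List α) :=
  {w | w ∈ M ∧ w ≠ [] ∧
    ¬ ∃ u v, u ∈ M ∧ v ∈ M ∧ u ≠ [] ∧ v ≠ [] ∧ u ++ v = w}

def IsMorphism (θ : List α → List α) : Prop :=
  ∀ u v, θ (u ++ v) = θ u ++ θ v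

def IsAntimorphism (θ : List α → List α) : Prop :=
  θ [] = [] ∧ ∀ u v, θ (u ++ v) = θ v ++ θ u

/-- `θ` is literal: the image of a letter is a letter. -/
def Literal (θ : List α → List α) : Prop := ∀ a : α, ∃ b : α, θ [a] = [b]

/-- `θ` is a bijective literal (anti)morphism of the free monoid. -/
def LitAnti (θ : List α → List α) : Prop :=
  Function.Bijective θ ∧ Literal θ ∧ (IsMorphism θ ∨ IsAntimorphism θ)

/-- The set `{θ^i z : i ∈ ℤ}` for a bijective `θ` (negative powers are
captured by `θ^[i] w = z`). -/
def OrbitZ (θ : List α → List α) (z : List α) : Set (List α) :=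
  {w | ∃ i : ℕ, θ^[i] z = w ∨ θ^[i] w = z}

def IsPrefixCode (X : Set (List α)) : Prop :=
  [] ∉ X ∧ ∀ x ∈ X, ∀ u, x ++ u ∈ X → u = []

def IsSuffixCode (X : Set (List α)) : Prop :=
  [] ∉ X ∧ ∀ x ∈ X, ∀ u, u ++ x ∈ X → u = []

/-- `X^k`: products of exactly `k` words of `X`. -/
def PowSet (X : Set (List α)) (k : ℕ) : Set (List α) :=
  {w | ∃ l : List (List α), l.length = k ∧ (∀ u ∈ l, u ∈ X) ∧ l.flatten = w}

/-- Circular code: `x₁⋯xₘ = s·y₂⋯yₙ·p` with `y₁ = ps ∈ X`, `s ≠ ε`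
forces `m = n`, `p = ε` and `xᵢ = yᵢ`. -/
def IsCircularCode (X : Set (List α)) : Prop :=
  ∀ (l ys : List (List α)) (p s : List α),
    (∀ u ∈ l, u ∈ X) → p ++ s ∈ X → (∀ u ∈ ys, u ∈ X) → s ≠ [] →
    l.flatten = s ++ ys.flatten ++ p → l = (p ++ s) :: ys ∧ p = []

/-- A word is overlapping-free if no proper nonempty prefix equals a suffix. -/
def OverlapFree (w : List α) : Prop :=
  ¬ ∃ u v : List α, u ≠ [] ∧ u.length ≤ w.length - 1 ∧ u ++ w = w ++ v

/-- `X` is a regular (rational) language: accepted by a finite automaton. -/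
def IsRegularSet (X : Set (List α)) : Prop :=
  ∃ (σ : Type) (_ : Fintype σ) (M : DFA α σ), M.accepts = X

/-!
It suffices that `θ(M) = M`. A bijective (anti)morphism `θ` with `θ(X) = X` maps `X^n` and `X*`
into themselves, and maps `X^{2k}A* ∩ A*X^{2k}` into itself (an antimorphism swaps the two
factors). Its inverse is again an (anti)morphism fixing `X`, hence `M`, and a bijection that
respects concatenation (up to order) in both directions preserves the indecomposable elements
of `M`.
-/

open Function Set

section Invariance

variable {θ ψ : List α → List α} {X S : Set (List α)}

lemma IsMorphism.map_nil (hθ : IsMorphism θ) : θ [] = [] :=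
  List.append_right_eq_self.mp (hθ [] []).symm

lemma IsMorphism.map_flatten (hθ : IsMorphism θ) (l : List (List α)) :
    θ l.flatten = (l.map θ).flatten := by
  induction l with
  | nil => exact hθ.map_nil
  | cons x l ih => simp only [List.flatten_cons, List.map_cons, hθ x, ih]

lemma IsAntimorphism.map_flatten (hθ : IsAntimorphism θ) (l : List (List α)) :
    θ l.flatten = (l.reverse.map θ).flatten := by
  induction l with
  | nil => exact hθ.1
  | cons x l ih => simp [hθ.2 x l.flatten, ih]

lemma IsMorphism.of_inverse (hθ : IsMorphism θ) (hψθ : LeftInverse ψ θ)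
    (hθψ : RightInverse ψ θ) : IsMorphism ψ := fun u v =>
  hψθ.injective (by rw [hθψ, hθ, hθψ, hθψ])

lemma IsAntimorphism.of_inverse (hθ : IsAntimorphism θ) (hψθ : LeftInverse ψ θ)
    (hθψ : RightInverse ψ θ) : IsAntimorphism ψ :=
  ⟨hψθ.injective (by rw [hθψ, hθ.1]), fun u v => hψθ.injective (by rw [hθψ, hθ.2, hθψ, hθψ])⟩

lemma exists_flatten_eq_of_mapsTo (hθ : IsMorphism θ ∨ IsAntimorphism θ) (hX : MapsTo θ X X)
    {l : List (List α)} (hl : ∀ u ∈ l, u ∈ X) :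
    ∃ l' : List (List α), l'.length = l.length ∧ (∀ u ∈ l', u ∈ X) ∧ l'.flatten = θ l.flatten := by
  rcases hθ with hθ | hθ
  · refine ⟨l.map θ, List.length_map _, ?_, (hθ.map_flatten l).symm⟩
    simpa only [List.forall_mem_map] using fun u hu => hX (hl u hu)
  · refine ⟨l.reverse.map θ, by simp, ?_, (hθ.map_flatten l).symm⟩
    simpa only [List.forall_mem_map, List.mem_reverse] using fun u hu => hX (hl u hu)

lemma mapsTo_powSet (hθ : IsMorphism θ ∨ IsAntimorphism θ) (hX : MapsTo θ X X) (n : ℕ) :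
    MapsTo θ (PowSet X n) (PowSet X n) := by
  rintro _ ⟨l, rfl, hl, rfl⟩
  obtain ⟨l', hlen, hl', heq⟩ := exists_flatten_eq_of_mapsTo hθ hX hl
  exact ⟨l', hlen, hl', heq⟩

lemma mapsTo_starSet (hθ : IsMorphism θ ∨ IsAntimorphism θ) (hX : MapsTo θ X X) :
    MapsTo θ (StarSet X) (StarSet X) := by
  rintro _ ⟨l, hl, rfl⟩
  obtain ⟨l', -, hl', heq⟩ := exists_flatten_eq_of_mapsTo hθ hX hl
  exact ⟨l', hl', heq⟩

lemma mapsTo_prefixed_inter_suffixed (hθ : IsMorphism θ ∨ IsAntimorphism θ) {P : Set (List α)}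
    (hP : MapsTo θ P P) :
    MapsTo θ {w | (∃ p ∈ P, ∃ s, w = p ++ s) ∧ (∃ q ∈ P, ∃ r, w = r ++ q)}
      {w | (∃ p ∈ P, ∃ s, w = p ++ s) ∧ (∃ q ∈ P, ∃ r, w = r ++ q)} := by
  rintro w ⟨⟨p, hp, s, hps⟩, ⟨q, hq, r, hrq⟩⟩
  rcases hθ with hθ | hθ
  · exact ⟨⟨θ p, hP hp, θ s, by rw [hps, hθ]⟩, ⟨θ q, hP hq, θ r, by rw [hrq, hθ]⟩⟩
  · exact ⟨⟨θ q, hP hq, θ r, by rw [hrq, hθ.2]⟩, ⟨θ p, hP hp, θ s, by rw [hps, hθ.2]⟩⟩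

def syncMonoid (X : Set (List α)) (k : ℕ) : Set (List α) :=
  {w | (∃ p ∈ PowSet X (2 * k), ∃ s, w = p ++ s) ∧
    (∃ q ∈ PowSet X (2 * k), ∃ r, w = r ++ q)} ∪ StarSet X

lemma mapsTo_syncMonoid (hθ : IsMorphism θ ∨ IsAntimorphism θ) (hX : MapsTo θ X X) (k : ℕ) :
    MapsTo θ (syncMonoid X k) (syncMonoid X k) :=
  (mapsTo_prefixed_inter_suffixed hθ (mapsTo_powSet hθ hX _)).union_union (mapsTo_starSet hθ hX)

lemma mapsTo_minGen (hθ : IsMorphism θ ∨ IsAntimorphism θ) (hψ : IsMorphism ψ ∨ IsAntimorphism ψ)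
    (hψθ : LeftInverse ψ θ) (hθψ : RightInverse ψ θ) (hθS : MapsTo θ S S) (hψS : MapsTo ψ S S) :
    MapsTo θ (MinGen S) (MinGen S) := by
  have hθnil : θ [] = [] := hθ.elim IsMorphism.map_nil (·.1)
  have hψnil : ψ [] = [] := hψ.elim IsMorphism.map_nil (·.1)
  have hψne : ∀ {u}, u ≠ [] → ψ u ≠ [] := fun {u} hu h => hu (by rw [← hθψ u, h, hθnil])
  rintro w ⟨hwS, hw, hindec⟩
  refine ⟨hθS hwS, fun h => hw (by rw [← hψθ w, h, hψnil]), ?_⟩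
  rintro ⟨u, v, hu, hv, hu', hv', huv⟩
  rcases hψ with hψ | hψ
  · exact hindec ⟨ψ u, ψ v, hψS hu, hψS hv, hψne hu', hψne hv', by rw [← hψ, huv, hψθ]⟩
  · exact hindec ⟨ψ v, ψ u, hψS hv, hψS hu, hψne hv', hψne hu', by rw [← hψ.2, huv, hψθ]⟩

lemma Invariant.mapsTo (h : Invariant θ S) : MapsTo θ S S :=
  image_subset_iff.mp h.subset

lemma Invariant.mapsTo_of_leftInverse (h : Invariant θ S) (hψθ : LeftInverse ψ θ) :
    MapsTo ψ S S := by
  intro x hx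
  rw [← h] at hx
  obtain ⟨y, hy, rfl⟩ := hx
  rwa [hψθ]

lemma invariant_of_mapsTo (hψθ : LeftInverse ψ θ) (hθψ : RightInverse ψ θ)
    (hθS : MapsTo θ S S) (hψS : MapsTo ψ S S) : Invariant θ S :=
  (InvOn.bijOn ⟨hψθ.leftInvOn S, hθψ.leftInvOn S⟩ hθS hψS).image_eq

end Invariance

theorem stmt12_general (θ : List α → List α) (hθ : LitAnti θ) (k : ℕ)
    (X : Set (List α)) (hinv : Invariant θ X) :
    Invariant θ (MinGen
      ({w | (∃ p ∈ PowSet X (2 * k), ∃ s, w = p ++ s) ∧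
            (∃ q ∈ PowSet X (2 * k), ∃ r, w = r ++ q)} ∪ StarSet X)) := by
  obtain ⟨hbij, -, hmor⟩ := hθ
  let e := Equiv.ofBijective θ hbij
  have hψθ : LeftInverse e.symm θ := e.left_inv
  have hθψ : RightInverse e.symm θ := e.right_inv
  have hψmor : IsMorphism e.symm ∨ IsAntimorphism e.symm :=
    hmor.imp (·.of_inverse hψθ hθψ) (·.of_inverse hψθ hθψ)
  have hθM := mapsTo_syncMonoid hmor hinv.mapsTo k
  have hψM := mapsTo_syncMonoid hψmor (hinv.mapsTo_of_leftInverse hψθ) k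
  exact invariant_of_mapsTo hψθ hθψ (mapsTo_minGen hmor hψmor hψθ hθψ hθM hψM)
    (mapsTo_minGen hψmor hmor hθψ hψθ hψM hθM)

theorem stmt12 (θ : List α → List α) (hθ : LitAnti θ) (k : ℕ)
    (X : Set (List α)) (hinv : Invariant θ X) (hcode : IsCode X)
    (hsync : ∀ x ∈ PowSet X k, ∀ y ∈ PowSet X k, ∀ u v : List α,
      u ≠ [] → v ≠ [] → u ++ x ++ y ++ v ∈ StarSet X →
      u ++ x ∈ StarSet X ∧ x ++ v ∈ StarSet X) :
    Invariant θ (MinGen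
      ({w | (∃ p ∈ PowSet X (2 * k), ∃ s, w = p ++ s) ∧
            (∃ q ∈ PowSet X (2 * k), ∃ r, w = r ++ q)} ∪ StarSet X)) :=
  stmt12_general θ hθ k X hinv
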